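/- arXiv:2405.05190 — 3 statements merged into one kernel-verified Lean document; each statement's English description precedes it below -/
import Mathlib

section
/- Let G be the Boolean hypercube graph on V = {+1,-1}^n and let H ⊆ V be nonempty. Define the discounted edge density of U ⊆ V as Φ(U) := (|E(U,U)| - Σ_{u∈U} dist(u,H)) / |U| for nonempty U, where E(U,U) is the set of hypercube edges with both endpoints in U and dist(u,H) is the Hamming distance from u to H. Then for every nonempty U ⊆ V, Φ(U) ≤ Φ(V). -/
open Finset

/-- Twice the number of hypercube edges with both endpoints in `U`
(ordered pairs of elements of `U` at Hamming distance 1). -/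
def edgePairs {n : ℕ} (U : Finset (Fin n → Bool)) : ℕ :=
  ((U ×ˢ U).filter fun p => hammingDist p.1 p.2 = 1).card

variable {n : ℕ}

def flp (i : Fin n) (v : Fin n → Bool) : Fin n → Bool := Function.update v i (!v i)

lemma flp_apply_self (i : Fin n) (v : Fin n → Bool) : flp i v i = !v i := by
  simp [flp]

lemma flp_apply_ne (i j : Fin n) (v : Fin n → Bool) (h : j ≠ i) : flp i v j = v j := by
  simp [flp, Function.update_of_ne h]

lemma hammingDist_flp (i : Fin n) (v : Fin n → Bool) : hammingDist v (flp i v) = 1 := by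
  unfold hammingDist
  rw [Finset.card_eq_one]
  refine ⟨i, ?_⟩
  ext j
  rcases eq_or_ne j i with rfl | h
  · simp [flp_apply_self]
  · simp [flp_apply_ne _ _ _ h, h]

lemma flp_cons_zero (b : Bool) (x : Fin n → Bool) :
    flp 0 (Fin.cons b x) = Fin.cons (!b) x := by
  unfold flp
  rw [Fin.cons_zero, Fin.update_cons_zero]

lemma flp_cons_succ (i : Fin n) (b : Bool) (x : Fin n → Bool) :
    flp i.succ (Fin.cons b x) = Fin.cons b (flp i x) := by
  unfold flp
  rw [Fin.cons_succ, Fin.cons_update]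

lemma sum_cons_split (g : (Fin (n+1) → Bool) → ℝ) :
    ∑ v : Fin (n+1) → Bool, g v = ∑ b : Bool, ∑ x : Fin n → Bool, g (Fin.cons b x) := by
  rw [← ((Fin.consEquiv (fun _ : Fin (n+1) => Bool)).sum_comp g)]
  rw [Fintype.sum_prod_type]
  rfl

lemma key : ∀ (n : ℕ) (f w : (Fin n → Bool) → ℝ),
    (∀ v i, |f v - f (flp i v)| ≤ 1) →
    (∀ v, 0 ≤ w v) → (∀ v, w v ≤ 1) →
    (∑ v, w v) * (∑ v, f v) ≤
      (2^n : ℝ) * ((∑ v, w v * f v) + (∑ v, ∑ i, w v * (1 - w (flp i v))) / 2) := by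
  intro n
  induction n with
  | zero =>
    intro f w hf hw0 hw1
    simp
  | succ n ih =>
    intro f w hf hw0 hw1
    set F : Bool → (Fin n → Bool) → ℝ := fun b x => f (Fin.cons b x) with hF
    set W : Bool → (Fin n → Bool) → ℝ := fun b x => w (Fin.cons b x) with hW
    -- IH for each half
    have hFlip : ∀ b, ∀ (x : Fin n → Bool) (i : Fin n), |F b x - F b (flp i x)| ≤ 1 := by
      intro b x i
      have := hf (Fin.cons b x) i.succ
      rwa [flp_cons_succ] at this
    have IH : ∀ b : Bool,
        (∑ x, W b x) * (∑ x, F b x) ≤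
        (2^n : ℝ) * ((∑ x, W b x * F b x) + (∑ x, ∑ i, W b x * (1 - W b (flp i x))) / 2) := by
      intro b
      exact ih (F b) (W b) (hFlip b) (fun x => hw0 _) (fun x => hw1 _)
    -- decompose all the sums
    rw [sum_cons_split w, sum_cons_split f, sum_cons_split (fun v => w v * f v),
      sum_cons_split (fun v => ∑ i, w v * (1 - w (flp i v)))]
    simp only [Fin.sum_univ_succ, flp_cons_zero, flp_cons_succ]
    rw [Fintype.sum_bool, Fintype.sum_bool, Fintype.sum_bool, Fintype.sum_bool]
    simp only [Bool.not_true, Bool.not_false]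
    have card2 : (Finset.univ : Finset (Fin n → Bool)).card = 2^n := by
      simp [Finset.card_univ]
    set T1 : ℝ := ∑ x, W true x with hT1
    set T0 : ℝ := ∑ x, W false x with hT0
    set S1 : ℝ := ∑ x, F true x with hS1
    set S0 : ℝ := ∑ x, F false x with hS0
    set C : ℝ := ∑ x, (W true x * (1 - W false x) + W false x * (1 - W true x)) with hC
    have habsS : |S0 - S1| ≤ 2^n := by
      rw [hS0, hS1, ← Finset.sum_sub_distrib]
      calc |∑ x, (F false x - F true x)| ≤ ∑ x, |F false x - F true x| :=
            Finset.abs_sum_le_sum_abs _ _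
        _ ≤ ∑ _x : Fin n → Bool, (1:ℝ) := by
            refine Finset.sum_le_sum fun x _ => ?_
            have := hf (Fin.cons true x) 0
            rw [flp_cons_zero, Bool.not_true] at this
            rw [abs_sub_comm] at this
            exact this
        _ = 2^n := by rw [Finset.sum_const, card2]; simp
    have habsT : |T1 - T0| ≤ C := by
      rw [hT1, hT0, ← Finset.sum_sub_distrib, hC]
      calc |∑ x, (W true x - W false x)| ≤ ∑ x, |W true x - W false x| :=
            Finset.abs_sum_le_sum_abs _ _
        _ ≤ ∑ x, (W true x * (1 - W false x) + W false x * (1 - W true x)) := by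
            refine Finset.sum_le_sum fun x _ => ?_
            have a0 := hw0 (Fin.cons true x); have a1 := hw1 (Fin.cons true x)
            have b0 := hw0 (Fin.cons false x); have b1 := hw1 (Fin.cons false x)
            rcases abs_cases (W true x - W false x) with ⟨h, _⟩ | ⟨h, _⟩ <;> rw [h] <;>
              nlinarith [a0, a1, b0, b1]
    have hC0 : 0 ≤ C := le_trans (abs_nonneg _) habsT
    have hcross : (T1 - T0) * (S0 - S1) ≤ 2^n * C := by
      calc (T1 - T0) * (S0 - S1) ≤ |T1 - T0| * |S0 - S1| := by
            calc (T1 - T0) * (S0 - S1) ≤ |(T1 - T0) * (S0 - S1)| := le_abs_self _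
              _ = |T1 - T0| * |S0 - S1| := abs_mul _ _
        _ ≤ C * 2^n := mul_le_mul habsT habsS (abs_nonneg _) hC0
        _ = 2^n * C := mul_comm _ _
    have I1 := IH true
    have I0 := IH false
    rw [← hT1, ← hT0, ← hS1, ← hS0] at *
    have hsplit : ∑ x : Fin n → Bool,
          (W true x * (1 - W false x) + ∑ i : Fin n, W true x * (1 - W true (flp i x))) +
        ∑ x : Fin n → Bool,
          (W false x * (1 - W true x) + ∑ i : Fin n, W false x * (1 - W false (flp i x)))
        = C + (∑ x, ∑ i, W true x * (1 - W true (flp i x)))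
            + (∑ x, ∑ i, W false x * (1 - W false (flp i x))) := by
      rw [Finset.sum_add_distrib, Finset.sum_add_distrib, hC, Finset.sum_add_distrib]
      ring
    rw [hsplit]
    rw [pow_succ]
    set B1 : ℝ := ∑ x, ∑ i, W true x * (1 - W true (flp i x))
    set B0 : ℝ := ∑ x, ∑ i, W false x * (1 - W false (flp i x))
    set P1 : ℝ := ∑ x, W true x * F true x
    set P0 : ℝ := ∑ x, W false x * F false x
    nlinarith [I1, I0, hcross]

lemma flp_flp (i : Fin n) (v : Fin n → Bool) : flp i (flp i v) = v := by
  funext j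
  rcases eq_or_ne j i with rfl | h
  · rw [flp_apply_self, flp_apply_self, Bool.not_not]
  · rw [flp_apply_ne _ _ _ h, flp_apply_ne _ _ _ h]

lemma flp_inj (u : Fin n → Bool) {i j : Fin n} (h : flp i u = flp j u) : i = j := by
  by_contra hne
  have h1 : flp i u i = flp j u i := by rw [h]
  rw [flp_apply_self, flp_apply_ne _ _ _ hne] at h1
  exact (Bool.not_ne_self (u i)) h1

lemma eq_flp_of_dist_one {u v : Fin n → Bool} (h : hammingDist u v = 1) :
    ∃ i, v = flp i u := by
  unfold hammingDist at h
  rw [Finset.card_eq_one] at h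
  obtain ⟨j, hj⟩ := h
  refine ⟨j, funext fun k => ?_⟩
  rcases eq_or_ne k j with rfl | hk
  · have : k ∈ ({k} : Finset (Fin n)) := Finset.mem_singleton_self k
    rw [← hj, Finset.mem_filter] at this
    rw [flp_apply_self]
    rcases Bool.eq_false_or_eq_true (u k) with h1 | h1 <;>
      rcases Bool.eq_false_or_eq_true (v k) with h2 | h2 <;>
      simp_all
  · have : k ∉ ({j} : Finset (Fin n)) := by simpa using hk
    rw [← hj, Finset.mem_filter] at this
    push_neg at this
    have := this (Finset.mem_univ k)
    rw [flp_apply_ne _ _ _ hk]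
    exact this.symm

lemma edgePairs_eq_sum (U : Finset (Fin n → Bool)) :
    edgePairs U = ∑ u ∈ U, ∑ i : Fin n, if flp i u ∈ U then 1 else 0 := by
  unfold edgePairs
  rw [Finset.card_filter, Finset.sum_product]
  refine Finset.sum_congr rfl fun u hu => ?_
  rw [← Finset.card_filter, ← Finset.card_filter]
  refine (Finset.card_bij (fun i _ => flp i u) ?_ ?_ ?_).symm
  · intro i hi
    rw [Finset.mem_filter] at hi ⊢
    exact ⟨hi.2, hammingDist_flp i u⟩
  · intro i _ j _ h
    exact flp_inj u h
  · intro v hv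
    rw [Finset.mem_filter] at hv
    obtain ⟨i, hi⟩ := eq_flp_of_dist_one (u := u) (v := v) hv.2
    refine ⟨i, ?_, hi.symm⟩
    rw [Finset.mem_filter]
    exact ⟨Finset.mem_univ i, hi ▸ hv.1⟩

lemma edgePairs_univ : edgePairs (Finset.univ : Finset (Fin n → Bool)) = 2^n * n := by
  rw [edgePairs_eq_sum]
  simp [Finset.card_univ, mul_comm]

lemma distH_lip (H : Finset (Fin n → Bool)) (hH : H.Nonempty) (v : Fin n → Bool) (i : Fin n) :
    |((H.inf' hH fun h => hammingDist v h : ℕ) : ℝ)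
      - ((H.inf' hH fun h => hammingDist (flp i v) h : ℕ) : ℝ)| ≤ 1 := by
  have main : ∀ (u w : Fin n → Bool), hammingDist u w = 1 →
      (H.inf' hH fun h => hammingDist u h) ≤ (H.inf' hH fun h => hammingDist w h) + 1 := by
    intro u w huw
    obtain ⟨h₀, hh₀, he⟩ := Finset.exists_mem_eq_inf' hH (fun h => hammingDist w h)
    rw [he]
    calc (H.inf' hH fun h => hammingDist u h) ≤ hammingDist u h₀ := Finset.inf'_le _ hh₀
      _ ≤ hammingDist u w + hammingDist w h₀ := hammingDist_triangle _ _ _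
      _ = hammingDist w h₀ + 1 := by rw [huw]; ring
  have h1 := main v (flp i v) (hammingDist_flp i v)
  have h2 := main (flp i v) v (by rw [hammingDist_comm]; exact hammingDist_flp i v)
  have h1' : ((H.inf' hH fun h => hammingDist v h : ℕ) : ℝ)
      ≤ ((H.inf' hH fun h => hammingDist (flp i v) h : ℕ) : ℝ) + 1 := by exact_mod_cast h1
  have h2' : ((H.inf' hH fun h => hammingDist (flp i v) h : ℕ) : ℝ)
      ≤ ((H.inf' hH fun h => hammingDist v h : ℕ) : ℝ) + 1 := by exact_mod_cast h2
  rw [abs_le]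
  constructor <;> linarith

/-- The discounted edge density `Φ(U) = (|E(U,U)| - Σ_{u∈U} dist(u,H)) / |U|`. -/
noncomputable def Phi {n : ℕ} (H : Finset (Fin n → Bool)) (hH : H.Nonempty)
    (U : Finset (Fin n → Bool)) : ℝ :=
  ((edgePairs U : ℝ) / 2 - ∑ u ∈ U, ((H.inf' hH fun h => hammingDist u h : ℕ) : ℝ)) / U.card

/-- The full vertex set maximizes discounted edge density among nonempty subsets. -/
theorem stmt4 {n : ℕ} (H : Finset (Fin n → Bool)) (hH : H.Nonempty)
    (U : Finset (Fin n → Bool)) (hU : U.Nonempty) :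
    Phi H hH U ≤ Phi H hH Finset.univ := by
  classical
  set f : (Fin n → Bool) → ℝ := fun u => ((H.inf' hH fun h => hammingDist u h : ℕ) : ℝ) with hf
  set w : (Fin n → Bool) → ℝ := fun v => if v ∈ U then 1 else 0 with hwdef
  have hw0 : ∀ v, 0 ≤ w v := by intro v; rw [hwdef]; dsimp only; split <;> norm_num
  have hw1 : ∀ v, w v ≤ 1 := by intro v; rw [hwdef]; dsimp only; split <;> norm_num
  have hk := key n f w (fun v i => distH_lip H hH v i) hw0 hw1
  have hsw : ∑ v, w v = (U.card : ℝ) := by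
    rw [hwdef]; dsimp only
    rw [Finset.sum_ite_mem, Finset.univ_inter, Finset.sum_const]
    simp
  have hswf : ∑ v, w v * f v = ∑ u ∈ U, f u := by
    rw [hwdef]; dsimp only
    simp only [ite_mul, one_mul, zero_mul]
    rw [Finset.sum_ite_mem, Finset.univ_inter]
  have hB : ∑ v, ∑ i : Fin n, w v * (1 - w (flp i v))
      = n * U.card - edgePairs U := by
    have : ∀ v, ∑ i : Fin n, w v * (1 - w (flp i v))
        = w v * ((n : ℝ) - ∑ i : Fin n, w (flp i v)) := by
      intro v
      rw [← Finset.mul_sum, Finset.sum_sub_distrib, Finset.sum_const]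
      simp
    simp only [this]
    rw [hwdef]
    dsimp only
    simp only [ite_mul, one_mul, zero_mul]
    rw [Finset.sum_ite_mem, Finset.univ_inter, Finset.sum_sub_distrib, Finset.sum_const,
      nsmul_eq_mul, edgePairs_eq_sum]
    push_cast
    ring
  rw [hsw, hswf, hB] at hk
  -- now the division manipulation
  have hcardU : (0:ℝ) < U.card := by exact_mod_cast hU.card_pos
  have hcardV : ((Finset.univ : Finset (Fin n → Bool)).card : ℝ) = 2^n := by
    simp [Finset.card_univ]
  unfold Phi
  rw [div_le_div_iff₀ hcardU (by rw [hcardV]; positivity)]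
  rw [hcardV, edgePairs_univ]
  have hcast : ((2^n * n : ℕ) : ℝ) = 2^n * n := by push_cast; ring
  rw [hcast]
  simp only [hf] at hk
  linarith [hk]
end

section
/- Let X₁,...,X_n be real-valued random variables with values in [0,c] for some c > 0 such that E[X_i | X₁,...,X_{i-1}] ≤ a_i for all i, and let μ = Σᵢ aᵢ. Then for any δ > 0, P[Σᵢ Xᵢ ≥ (1+δ)·μ] ≤ exp(-δ²·μ / ((2+δ)·c)). -/
open MeasureTheory

lemma stmt14_log_aux {x : ℝ} (hx : 0 < x) : 2 * x / (2 + x) ≤ Real.log (1 + x) := by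
  have key : ∀ y : ℝ, 0 ≤ y → 2 * y ≤ (2 + y) * Real.log (1 + y) := by
    set f : ℝ → ℝ := fun y => (2 + y) * Real.log (1 + y) - 2 * y with hf
    have hderiv : ∀ y : ℝ, 0 < y →
        HasDerivAt f (Real.log (1 + y) + (2 + y) / (1 + y) - 2) y := by
      intro y hy
      have h1 : HasDerivAt (fun z : ℝ => 1 + z) 1 y := (hasDerivAt_id y).const_add 1
      have hlog : HasDerivAt (fun z : ℝ => Real.log (1 + z)) (1 / (1 + y)) y := by
        simpa using h1.log (by linarith)
      have h2 : HasDerivAt (fun z : ℝ => 2 + z) 1 y := (hasDerivAt_id y).const_add 2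
      have h3 := (h2.mul hlog).sub ((hasDerivAt_id y).const_mul 2)
      exact h3.congr_deriv (by ring)
    have hcont : ContinuousOn f (Set.Ici 0) := by
      apply ContinuousOn.sub
      · apply ContinuousOn.mul (by fun_prop)
        apply ContinuousOn.log (by fun_prop)
        intro y hy
        simp only [Set.mem_Ici] at hy
        intro h
        linarith
      · fun_prop
    have hmono : MonotoneOn f (Set.Ici 0) := by
      apply monotoneOn_of_deriv_nonneg (convex_Ici 0) hcont
      · intro y hy
        rw [interior_Ici] at hy
        exact (hderiv y hy).differentiableAt.differentiableWithinAt
      · intro y hy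
        rw [interior_Ici] at hy
        have hy' : (0:ℝ) < y := hy
        rw [(hderiv y hy').deriv]
        have hpos : (0:ℝ) < 1 + y := by linarith
        have hlb : y / (1 + y) ≤ Real.log (1 + y) := by
          have h := Real.one_sub_inv_le_log_of_pos hpos
          have h1 : 1 - (1 + y)⁻¹ = y / (1 + y) := by
            rw [inv_eq_one_div]
            field_simp
            ring
          linarith [h1 ▸ h]
        have h2 : (2 + y) / (1 + y) - 2 = -(y / (1 + y)) := by
          field_simp
          ring
        linarith
    intro y hy
    have h := hmono (Set.self_mem_Ici) (Set.mem_Ici.2 hy) hy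
    have h0 : f 0 = 0 := by simp [hf]
    have hfy : f y = (2 + y) * Real.log (1 + y) - 2 * y := rfl
    rw [h0, hfy] at h
    linarith
  have h := key x hx.le
  rw [div_le_iff₀ (by linarith)]
  linarith [h]

/-- Multiplicative Azuma inequality: `X_1,...,X_n ∈ [0,c]` a.s. with
`E[X_i | X_1,...,X_{i-1}] ≤ a_i`, and `μ = Σ a_i`. Then for any `δ > 0`,
`P[Σ X_i ≥ (1+δ)·μ] ≤ exp(-δ²·μ/((2+δ)·c))`. -/
theorem stmt14 {Ω : Type*} {m : MeasurableSpace Ω} {ℙ : Measure Ω} [IsProbabilityMeasure ℙ]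
    (n : ℕ) (X : ℕ → Ω → ℝ) (ℱ : Filtration ℕ m) (c : ℝ) (hc : 0 < c)
    (hadp : ∀ i, StronglyMeasurable[ℱ i] (X i))
    (hbdd : ∀ i, ∀ᵐ ω ∂ℙ, X i ω ∈ Set.Icc 0 c)
    (a : ℕ → ℝ)
    (hcond : ∀ i, ∀ᵐ ω ∂ℙ, (ℙ[X i|ℱ (i - 1)]) ω ≤ a i)
    (δ : ℝ) (hδ : 0 < δ) :
    ℙ {ω | (∑ i ∈ Finset.Icc 1 n, X i ω) ≥ (1 + δ) * (∑ i ∈ Finset.Icc 1 n, a i)} ≤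
      ENNReal.ofReal
        (Real.exp (-(δ ^ 2 * (∑ i ∈ Finset.Icc 1 n, a i)) / ((2 + δ) * c))) := by
  have hm : ∀ i, ℱ i ≤ m := fun i => ℱ.le i
  have hXm : ∀ i, StronglyMeasurable (X i) := fun i => (hadp i).mono (hm i)
  have hXint : ∀ i, Integrable (X i) ℙ := by
    intro i
    refine Integrable.mono' (integrable_const c) (hXm i).aestronglyMeasurable ?_
    filter_upwards [hbdd i] with ω hω
    rw [Real.norm_eq_abs, abs_le]
    exact ⟨by linarith [hω.1], hω.2⟩
  have ha : ∀ i, 0 ≤ a i := by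
    intro i
    have h1 : (0 : Ω → ℝ) ≤ᵐ[ℙ] ℙ[X i|ℱ (i-1)] :=
      condExp_nonneg (by filter_upwards [hbdd i] with ω hω using hω.1)
    obtain ⟨ω, hω1, hω2⟩ := (h1.and (hcond i)).exists
    exact le_trans hω1 hω2
  set μa := ∑ i ∈ Finset.Icc 1 n, a i with hμas
  have hμa0 : 0 ≤ μa := Finset.sum_nonneg fun i _ => ha i
  set t := Real.log (1 + δ) / c with hts
  have h1δ : (0:ℝ) < 1 + δ := by linarith
  have hlogpos : 0 < Real.log (1 + δ) := Real.log_pos (by linarith)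
  have ht : 0 < t := div_pos hlogpos hc
  have htc : t * c = Real.log (1 + δ) := div_mul_cancel₀ _ hc.ne'
  have hexp_tc : Real.exp (t * c) = 1 + δ := by rw [htc, Real.exp_log h1δ]
  set B := δ / c with hBs
  have hB : 0 ≤ B := div_nonneg hδ.le hc.le
  -- convexity bound
  have hconv : ∀ x : ℝ, x ∈ Set.Icc 0 c → Real.exp (t * x) ≤ 1 + B * x := by
    intro x hx
    have hs0 : 0 ≤ x / c := div_nonneg hx.1 hc.le
    have hs1 : x / c ≤ 1 := (div_le_one hc).2 hx.2
    have h := convexOn_exp.2 (Set.mem_univ (0:ℝ)) (Set.mem_univ (t * c))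
      (by linarith : (0:ℝ) ≤ 1 - x / c) hs0 (by ring)
    simp only [smul_eq_mul, mul_zero, zero_add, Real.exp_zero, mul_one, hexp_tc] at h
    have hx' : x / c * (t * c) = t * x := by field_simp
    rw [hx'] at h
    calc Real.exp (t * x) ≤ (1 - x / c) + x / c * (1 + δ) := h
      _ = 1 + B * x := by rw [hBs]; field_simp; ring
  -- the running exponential
  set S : ℕ → Ω → ℝ := fun k ω => ∑ j ∈ Finset.Icc 1 k, X j ω with hSs
  set E : ℕ → Ω → ℝ := fun k ω => Real.exp (t * S k ω) with hEs
  have hSm : ∀ k, StronglyMeasurable[ℱ k] (S k) := by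
    intro k
    show StronglyMeasurable[ℱ k] fun ω => ∑ j ∈ Finset.Icc 1 k, X j ω
    refine Finset.stronglyMeasurable_fun_sum (M := ℝ) (f := X) (Finset.Icc 1 k) fun j hj => ?_
    exact (hadp j).mono (ℱ.mono (Finset.mem_Icc.1 hj).2)
  have hEm : ∀ k, StronglyMeasurable[ℱ k] (E k) := fun k =>
    Real.continuous_exp.comp_stronglyMeasurable (stronglyMeasurable_const.mul (hSm k))
  have hb : ∀ᵐ ω ∂ℙ, ∀ j, X j ω ∈ Set.Icc 0 c := ae_all_iff.2 hbdd
  have hSb : ∀ k, ∀ᵐ ω ∂ℙ, S k ω ≤ k * c := by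
    intro k
    filter_upwards [hb] with ω hω
    calc S k ω ≤ ∑ j ∈ Finset.Icc 1 k, c := Finset.sum_le_sum fun j _ => (hω j).2
      _ = k * c := by rw [Finset.sum_const, Nat.card_Icc]; simp
  have hEpos : ∀ k ω, 0 < E k ω := fun k ω => Real.exp_pos _
  have hEint : ∀ k, Integrable (E k) ℙ := by
    intro k
    refine Integrable.mono' (integrable_const (Real.exp (t * (k * c))))
      ((hEm k).mono (hm k)).aestronglyMeasurable ?_
    filter_upwards [hSb k] with ω hω
    rw [Real.norm_eq_abs, abs_of_pos (hEpos k ω)]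
    exact Real.exp_le_exp.2 (mul_le_mul_of_nonneg_left hω ht.le)
  -- key induction
  have hkey : ∀ k, ∫ ω, E k ω ∂ℙ ≤ Real.exp (B * ∑ j ∈ Finset.Icc 1 k, a j) := by
    intro k
    induction k with
    | zero =>
      have : ∀ ω, E 0 ω = 1 := by intro ω; simp [hEs, hSs]
      rw [show (fun ω => E 0 ω) = fun _ => (1:ℝ) from funext this]
      simp
    | succ k ih =>
      set g : Ω → ℝ := fun ω => Real.exp (t * X (k+1) ω) with hgs
      have hsplit : (fun ω => E (k+1) ω) = fun ω => E k ω * g ω := by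
        funext ω
        simp only [hEs, hSs, hgs]
        rw [Finset.sum_Icc_succ_top (Nat.le_add_left 1 k), ← Real.exp_add]
        ring_nf
      have hgm : StronglyMeasurable g :=
        Real.continuous_exp.comp_stronglyMeasurable (stronglyMeasurable_const.mul (hXm (k+1)))
      have hgb : ∀ᵐ ω ∂ℙ, ‖g ω‖ ≤ Real.exp (t * c) := by
        filter_upwards [hbdd (k+1)] with ω hω
        rw [Real.norm_eq_abs, abs_of_pos (Real.exp_pos _)]
        exact Real.exp_le_exp.2 (mul_le_mul_of_nonneg_left hω.2 ht.le)
      have hgint : Integrable g ℙ :=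
        Integrable.mono' (integrable_const _) hgm.aestronglyMeasurable hgb
      have hfgint : Integrable (E k * g) ℙ :=
        hgint.bdd_mul ((hEm k).mono (hm k)).aestronglyMeasurable
          (by filter_upwards [hSb k] with ω hω
              rw [Real.norm_eq_abs, abs_of_pos (hEpos k ω)]
              exact Real.exp_le_exp.2 (mul_le_mul_of_nonneg_left hω ht.le))
      -- conditional expectation bound on g
      have hXc : ℙ[X (k+1)|ℱ k] ≤ᵐ[ℙ] fun _ => a (k+1) := by
        have := hcond (k+1)
        simp only [Nat.add_sub_cancel] at this; exact this
      have hcondg : ℙ[g|ℱ k] ≤ᵐ[ℙ] fun _ => 1 + B * a (k+1) := by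
        have h1 : g ≤ᵐ[ℙ] (fun _ => (1:ℝ)) + B • X (k+1) := by
          filter_upwards [hbdd (k+1)] with ω hω
          simpa using hconv _ hω
        have hint2 : Integrable ((fun _ => (1:ℝ)) + B • X (k+1)) ℙ :=
          (integrable_const 1).add ((hXint (k+1)).smul B)
        have h2 := condExp_mono (m := ℱ k) (μ := ℙ) hgint hint2 h1
        have h3 : ℙ[(fun _ => (1:ℝ)) + B • X (k+1)|ℱ k]
            =ᵐ[ℙ] (fun _ => (1:ℝ)) + B • ℙ[X (k+1)|ℱ k] := by
          refine (condExp_add (integrable_const 1) ((hXint (k+1)).smul B) _).trans ?_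
          have h4 := condExp_smul (m := ℱ k) (μ := ℙ) B (X (k+1))
          filter_upwards [h4] with ω hω
          simp [condExp_const (hm k), hω]
        filter_upwards [h2, h3, hXc] with ω hω2 hω3 hωc
        have h5 : (ℙ[g|ℱ k]) ω ≤ 1 + B * (ℙ[X (k+1)|ℱ k]) ω := by
          rw [hω3] at hω2; simpa using hω2
        have h6 : B * (ℙ[X (k+1)|ℱ k]) ω ≤ B * a (k+1) :=
          mul_le_mul_of_nonneg_left hωc hB
        show (ℙ[g|ℱ k]) ω ≤ 1 + B * a (k+1)
        linarith
      have hEcint : Integrable (fun ω => E k ω * (ℙ[g|ℱ k]) ω) ℙ :=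
        integrable_condExp.bdd_mul ((hEm k).mono (hm k)).aestronglyMeasurable
          (by filter_upwards [hSb k] with ω hω
              rw [Real.norm_eq_abs, abs_of_pos (hEpos k ω)]
              exact Real.exp_le_exp.2 (mul_le_mul_of_nonneg_left hω ht.le))
      have step : ∫ ω, E (k+1) ω ∂ℙ
          ≤ (1 + B * a (k+1)) * ∫ ω, E k ω ∂ℙ := by
        calc ∫ ω, E (k+1) ω ∂ℙ = ∫ ω, (E k * g) ω ∂ℙ := by rw [hsplit]; rfl
          _ = ∫ ω, (ℙ[E k * g|ℱ k]) ω ∂ℙ := (integral_condExp (hm k)).symm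
          _ = ∫ ω, E k ω * (ℙ[g|ℱ k]) ω ∂ℙ := by
              refine integral_congr_ae ?_
              filter_upwards [condExp_mul_of_stronglyMeasurable_left (hEm k) hfgint hgint] with ω hω
              simpa using hω
          _ ≤ ∫ ω, E k ω * (1 + B * a (k+1)) ∂ℙ := by
              refine integral_mono_ae hEcint ((hEint k).mul_const _) ?_
              filter_upwards [hcondg] with ω hω
              exact mul_le_mul_of_nonneg_left hω (hEpos k ω).le
          _ = (1 + B * a (k+1)) * ∫ ω, E k ω ∂ℙ := by
              rw [integral_mul_const]; ring
      have hC : 1 + B * a (k+1) ≤ Real.exp (B * a (k+1)) := by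
        linarith [Real.add_one_le_exp (B * a (k+1))]
      have hintpos : 0 ≤ ∫ ω, E k ω ∂ℙ := integral_nonneg fun ω => (hEpos k ω).le
      calc ∫ ω, E (k+1) ω ∂ℙ ≤ (1 + B * a (k+1)) * ∫ ω, E k ω ∂ℙ := step
        _ ≤ Real.exp (B * a (k+1)) * Real.exp (B * ∑ j ∈ Finset.Icc 1 k, a j) := by
            have h0 : 0 ≤ 1 + B * a (k+1) := by nlinarith [ha (k+1)]
            calc (1 + B * a (k+1)) * ∫ ω, E k ω ∂ℙ
                ≤ (1 + B * a (k+1)) * Real.exp (B * ∑ j ∈ Finset.Icc 1 k, a j) :=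
                  mul_le_mul_of_nonneg_left ih h0
              _ ≤ _ := mul_le_mul_of_nonneg_right hC (Real.exp_pos _).le
        _ = Real.exp (B * ∑ j ∈ Finset.Icc 1 (k+1), a j) := by
            rw [← Real.exp_add, Finset.sum_Icc_succ_top (Nat.le_add_left 1 k)]
            ring_nf
  -- Markov / Chernoff
  set r := Real.exp (t * ((1 + δ) * μa)) with hrs
  have hrpos : 0 < r := Real.exp_pos _
  have hsub : {ω | (∑ i ∈ Finset.Icc 1 n, X i ω) ≥ (1 + δ) * μa} ⊆ {ω | r ≤ E n ω} := by
    intro ω hω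
    simp only [Set.mem_setOf_eq] at hω ⊢
    exact Real.exp_le_exp.2 (mul_le_mul_of_nonneg_left hω ht.le)
  have hmarkov := mul_meas_ge_le_integral_of_nonneg
    (ae_of_all ℙ fun ω => (hEpos n ω).le) (hEint n) r
  have htR : (ℙ {ω | r ≤ E n ω}).toReal ≤ Real.exp (B * μa - t * ((1 + δ) * μa)) := by
    rw [Real.exp_sub, ← hrs]
    rw [le_div_iff₀ hrpos, mul_comm]
    exact hmarkov.trans (hkey n)
  -- exponent comparison
  have hL : 2 * δ / (2 + δ) ≤ Real.log (1 + δ) := stmt14_log_aux hδ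
  have h2δ : (0:ℝ) < 2 + δ := by linarith
  have key2 : δ - (1 + δ) * Real.log (1 + δ) ≤ -(δ^2 / (2 + δ)) := by
    have h := mul_le_mul_of_nonneg_left hL (by linarith : (0:ℝ) ≤ 1 + δ)
    have heq : (1 + δ) * (2 * δ / (2 + δ)) = (2 * δ * (1 + δ)) / (2 + δ) := by ring
    have heq2 : δ - (2 * δ * (1 + δ)) / (2 + δ) = -(δ^2 / (2 + δ)) := by
      field_simp
      ring
    linarith [heq ▸ h, heq2]
  have hexpineq : B * μa - t * ((1 + δ) * μa) ≤ -(δ ^ 2 * μa) / ((2 + δ) * c) := by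
    have e1 : B * μa - t * ((1 + δ) * μa) = (δ - (1 + δ) * Real.log (1 + δ)) * (μa / c) := by
      rw [hBs, hts]; field_simp
    have e2 : -(δ ^ 2 * μa) / ((2 + δ) * c) = (-(δ^2 / (2 + δ))) * (μa / c) := by
      field_simp
    rw [e1, e2]
    exact mul_le_mul_of_nonneg_right key2 (div_nonneg hμa0 hc.le)
  calc ℙ {ω | (∑ i ∈ Finset.Icc 1 n, X i ω) ≥ (1 + δ) * μa}
      ≤ ℙ {ω | r ≤ E n ω} := measure_mono hsub
    _ = ENNReal.ofReal ((ℙ {ω | r ≤ E n ω}).toReal) :=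
        (ENNReal.ofReal_toReal (measure_ne_top _ _)).symm
    _ ≤ ENNReal.ofReal (Real.exp (-(δ ^ 2 * μa) / ((2 + δ) * c))) := by
        refine ENNReal.ofReal_le_ofReal (htR.trans (Real.exp_le_exp.2 hexpineq))
end

section
/- Suppose for every n, a learner à given a sample of size n achieves expected leave-one-out (transductive) error at most ε̃(n). Define a randomized learner A that, on a sample of size n+1 and test index i, selects a uniformly random subset S' of S_{-i} of size n-1 and predicts Ã(S')(x_i). Then A achieves transductive error at most ε̃(n) on every sample of size n+1; that is, E_{i uniform}[E_{S'}[ℓ(Ã(S')(x_i), y_i)]] ≤ ε̃(n). -/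
/-- The unique index `l` such that `(i.succAbove j).succAbove l = i`. -/
noncomputable def stmt15Inv {n : ℕ} (i : Fin (n + 2)) (j : Fin (n + 1)) : Fin (n + 1) :=
  (Fin.exists_succAbove_eq (Fin.ne_succAbove i j)).choose

lemma stmt15Inv_spec {n : ℕ} (i : Fin (n + 2)) (j : Fin (n + 1)) :
    (i.succAbove j).succAbove (stmt15Inv i j) = i :=
  (Fin.exists_succAbove_eq (Fin.ne_succAbove i j)).choose_spec

lemma stmt15_range (p : Fin (n + 2)) (q : Fin (n + 1)) :
    Set.range (p.succAbove ∘ q.succAbove) = ({p, p.succAbove q} : Set (Fin (n + 2)))ᶜ := by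
  ext x
  simp only [Set.range_comp, Fin.range_succAbove, Set.mem_image, Set.mem_compl_iff,
    Set.mem_insert_iff, Set.mem_singleton_iff, not_or]
  constructor
  · rintro ⟨y, hy, rfl⟩
    exact ⟨Fin.succAbove_ne p y, fun h => hy (Fin.succAbove_right_injective h)⟩
  · rintro ⟨h1, h2⟩
    obtain ⟨y, rfl⟩ := Fin.exists_succAbove_eq h1
    exact ⟨y, fun h => h2 (by rw [h]), rfl⟩

lemma stmt15_comp_eq {n : ℕ} (i : Fin (n + 2)) (j : Fin (n + 1)) :
    i.succAbove ∘ j.succAbove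
      = (i.succAbove j).succAbove ∘ (stmt15Inv i j).succAbove := by
  have h1 : StrictMono (i.succAbove ∘ j.succAbove) :=
    (Fin.strictMono_succAbove i).comp (Fin.strictMono_succAbove j)
  have h2 : StrictMono ((i.succAbove j).succAbove ∘ (stmt15Inv i j).succAbove) :=
    (Fin.strictMono_succAbove _).comp (Fin.strictMono_succAbove _)
  refine (h1.range_inj h2).mp ?_
  rw [stmt15_range, stmt15_range, stmt15Inv_spec]
  ext x; simp [or_comm]

lemma stmt15_invol {n : ℕ} :
    Function.Involutive (fun p : Fin (n + 2) × Fin (n + 1) =>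
      (p.1.succAbove p.2, stmt15Inv p.1 p.2)) := by
  rintro ⟨i, j⟩
  simp only [Prod.mk.injEq]
  refine ⟨stmt15Inv_spec i j, ?_⟩
  apply Fin.succAbove_right_injective (p := i)
  have h := stmt15Inv_spec (i.succAbove j) (stmt15Inv i j)
  rwa [stmt15Inv_spec i j] at h

/-- If a learner `Ã` achieves transductive (leave-one-out) error at most `ε` on every
sample of size `n+1` (being trained on `n` points), then the learner that, given a
sample of size `n+2` and test index `i`, trains `Ã` on a uniformly random subset of the
remaining points of size `n` achieves transductive error at most `ε` as well. -/
theorem stmt15 {X Yl : Type*} (n : ℕ) (ℓ : Yl → Yl → ℝ)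
    (Atil : (Fin n → X × Yl) → X → Yl) (ε : ℝ)
    (hguar : ∀ T : Fin (n + 1) → X × Yl,
      (1 / ((n : ℝ) + 1)) *
          ∑ i, ℓ (Atil (T ∘ i.succAbove) (T i).1) (T i).2 ≤ ε)
    (S : Fin (n + 2) → X × Yl) :
    (1 / ((n : ℝ) + 2)) *
        ∑ i, (1 / ((n : ℝ) + 1)) *
          ∑ j : Fin (n + 1),
            ℓ (Atil ((S ∘ i.succAbove) ∘ j.succAbove) (S i).1) (S i).2 ≤ ε := by
  have key : ∑ p : Fin (n + 2) × Fin (n + 1),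
        ℓ (Atil ((S ∘ p.1.succAbove) ∘ p.2.succAbove) (S p.1).1) (S p.1).2
      = ∑ p : Fin (n + 2) × Fin (n + 1),
        ℓ (Atil ((S ∘ p.1.succAbove) ∘ p.2.succAbove) (S (p.1.succAbove p.2)).1)
          (S (p.1.succAbove p.2)).2 := by
    apply Fintype.sum_bijective _ stmt15_invol.bijective
    rintro ⟨i, j⟩
    simp only
    rw [stmt15Inv_spec i j]
    congr 2
    rw [Function.comp_assoc, Function.comp_assoc, ← stmt15_comp_eq]
  have hsum : ∀ k : Fin (n + 2),
      (1 / ((n : ℝ) + 1)) * ∑ l : Fin (n + 1),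
        ℓ (Atil ((S ∘ k.succAbove) ∘ l.succAbove) (S (k.succAbove l)).1)
          (S (k.succAbove l)).2 ≤ ε := fun k => hguar (S ∘ k.succAbove)
  have hmain : ∑ i, (1 / ((n : ℝ) + 1)) *
          ∑ j : Fin (n + 1),
            ℓ (Atil ((S ∘ i.succAbove) ∘ j.succAbove) (S i).1) (S i).2
      ≤ ((n : ℝ) + 2) * ε := by
    rw [← Finset.mul_sum]
    have e1 : ∑ i : Fin (n + 2), ∑ j : Fin (n + 1),
          ℓ (Atil ((S ∘ i.succAbove) ∘ j.succAbove) (S i).1) (S i).2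
        = ∑ p : Fin (n + 2) × Fin (n + 1),
          ℓ (Atil ((S ∘ p.1.succAbove) ∘ p.2.succAbove) (S p.1).1) (S p.1).2 := by
      rw [Fintype.sum_prod_type]
    have e2 : ∑ k : Fin (n + 2), ∑ l : Fin (n + 1),
          ℓ (Atil ((S ∘ k.succAbove) ∘ l.succAbove) (S (k.succAbove l)).1)
            (S (k.succAbove l)).2
        = ∑ p : Fin (n + 2) × Fin (n + 1),
          ℓ (Atil ((S ∘ p.1.succAbove) ∘ p.2.succAbove) (S (p.1.succAbove p.2)).1)
            (S (p.1.succAbove p.2)).2 := by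
      rw [Fintype.sum_prod_type]
    rw [e1, key, ← e2, Finset.mul_sum]
    calc ∑ k : Fin (n + 2), (1 / ((n : ℝ) + 1)) * ∑ l : Fin (n + 1),
            ℓ (Atil ((S ∘ k.succAbove) ∘ l.succAbove) (S (k.succAbove l)).1)
              (S (k.succAbove l)).2
        ≤ ∑ _k : Fin (n + 2), ε := Finset.sum_le_sum fun k _ => hsum k
      _ = ((n : ℝ) + 2) * ε := by simp [Fin.sum_const]
  have h2 : (0 : ℝ) < (n : ℝ) + 2 := by positivity
  rw [div_mul_eq_mul_div, one_mul, div_le_iff₀ h2]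
  linarith [hmain]
end
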